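/- arXiv:1511.03516 — 3 statements merged into one kernel-verified Lean document; each statement's English description precedes it below -/
import Mathlib

section
/- For any finite family of probability mass functions p₁, …, p_k on a finite set V, there exists a joint probability mass function μ on V^k whose i-th marginal equals p_i for each i, and such that for every v ∈ V, μ(v, v, …, v) = min_i p_i(v). -/
/-! Put the common mass `m v = min_i p_i v` on the diagonal and couple the leftovers `p_i - m`,
all of total mass `β = 1 - ∑ v, m v`, independently:
`μ f = m-on-diagonal + β ∏ i, (p_i - m)(f i) / β`. The independent part vanishes on the
diagonal, since at every `v` some `p_i v - m v` is zero, so `μ (v, …, v) = m v`. -/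

open Finset

section Coupling

variable {ι V : Type*} [Fintype ι]

section Residual

variable [Nonempty ι] (p : ι → V → ℝ)

def minMass (v : V) : ℝ := univ.inf' univ_nonempty (fun i => p i v)

theorem minMass_le (i : ι) (v : V) : minMass p v ≤ p i v := inf'_le _ (mem_univ i)

theorem exists_minMass_eq (v : V) : ∃ i, minMass p v = p i v := by
  obtain ⟨i, -, hi⟩ := exists_mem_eq_inf' univ_nonempty (fun i => p i v)
  exact ⟨i, hi⟩

theorem minMass_nonneg {p : ι → V → ℝ} (hp0 : ∀ i v, 0 ≤ p i v) (v : V) :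
    0 ≤ minMass p v :=
  le_inf' _ _ fun i _ => hp0 i v

variable [Fintype V]

def residualMass : ℝ := 1 - ∑ v, minMass p v

noncomputable def normalizedResidual (i : ι) (v : V) : ℝ :=
  (p i v - minMass p v) / residualMass p

variable {p}

theorem sum_sub_minMass (hp1 : ∀ i, ∑ v, p i v = 1) (i : ι) :
    ∑ v, (p i v - minMass p v) = residualMass p := by
  rw [sum_sub_distrib, hp1, residualMass]

theorem residualMass_nonneg (hp1 : ∀ i, ∑ v, p i v = 1) : 0 ≤ residualMass p := by
  obtain ⟨i⟩ := ‹Nonempty ι›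
  rw [← sum_sub_minMass hp1 i]
  exact sum_nonneg fun v _ => sub_nonneg.2 (minMass_le p i v)

theorem normalizedResidual_nonneg (hp1 : ∀ i, ∑ v, p i v = 1) (i : ι) (v : V) :
    0 ≤ normalizedResidual p i v :=
  div_nonneg (sub_nonneg.2 (minMass_le p i v)) (residualMass_nonneg hp1)

end Residual

variable [Fintype V] [DecidableEq V]

def diagonalMass (m : V → ℝ) (f : ι → V) : ℝ :=
  ∑ w, if f = (fun _ => w) then m w else 0

theorem diagonalMass_nonneg {m : V → ℝ} (hm : ∀ v, 0 ≤ m v) (f : ι → V) :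
    0 ≤ diagonalMass m f :=
  sum_nonneg fun w _ => by split_ifs <;> simp [hm]

theorem diagonalMass_const [Nonempty ι] (m : V → ℝ) (v : V) :
    diagonalMass (ι := ι) m (fun _ => v) = m v := by
  simp [diagonalMass, funext_iff]

noncomputable def maximalCoupling [Nonempty ι] (p : ι → V → ℝ) (f : ι → V) : ℝ :=
  diagonalMass (minMass p) f + residualMass p * ∏ i, normalizedResidual p i (f i)

theorem maximalCoupling_nonneg [Nonempty ι] {p : ι → V → ℝ} (hp0 : ∀ i v, 0 ≤ p i v)
    (hp1 : ∀ i, ∑ v, p i v = 1) (f : ι → V) : 0 ≤ maximalCoupling p f :=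
  add_nonneg (diagonalMass_nonneg (minMass_nonneg hp0) f) <| mul_nonneg (residualMass_nonneg hp1)
    (prod_nonneg fun i _ => normalizedResidual_nonneg hp1 i (f i))

theorem maximalCoupling_const [Nonempty ι] (p : ι → V → ℝ) (v : V) :
    maximalCoupling p (fun _ => v) = minMass p v := by
  obtain ⟨i, hi⟩ := exists_minMass_eq p v
  rw [maximalCoupling, diagonalMass_const,
    prod_eq_zero (mem_univ i) (by simp [normalizedResidual, hi]), mul_zero, add_zero]

variable [DecidableEq ι]

def marginal (μ : (ι → V) → ℝ) (i : ι) (v : V) : ℝ :=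
  ∑ f ∈ univ.filter (fun f : ι → V => f i = v), μ f

theorem sum_eq_sum_marginal (μ : (ι → V) → ℝ) (i : ι) :
    ∑ f, μ f = ∑ v, marginal μ i v :=
  (sum_fiberwise univ (fun f : ι → V => f i) μ).symm

theorem marginal_diagonalMass (m : V → ℝ) (i : ι) (v : V) :
    marginal (diagonalMass m) i v = m v := by
  simp only [marginal, diagonalMass]
  rw [sum_comm]
  simp [sum_ite_eq', eq_comm]

theorem filter_apply_eq_piFinset (i : ι) (v : V) :
    univ.filter (fun f : ι → V => f i = v) =
      Fintype.piFinset (Function.update (fun _ => (univ : Finset V)) i {v}) := by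
  ext f
  simp only [mem_filter, mem_univ, true_and, Fintype.mem_piFinset]
  constructor
  · rintro rfl j
    rcases eq_or_ne j i with rfl | hj <;> simp [*]
  · intro h
    simpa using h i

theorem marginal_prod (q : ι → V → ℝ) (i : ι) (v : V) :
    marginal (fun f => ∏ j, q j (f j)) i v = q i v * ∏ j ∈ univ.erase i, ∑ w, q j w := by
  rw [marginal, filter_apply_eq_piFinset, ← prod_univ_sum, ← mul_prod_erase _ _ (mem_univ i)]
  congr 1
  · simp
  · refine prod_congr rfl fun j hj => ?_
    rw [Function.update_of_ne (ne_of_mem_erase hj)]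

section MaximalCoupling

variable [Nonempty ι] {p : ι → V → ℝ}

theorem residualMass_mul_marginal_normalizedResidual (hp1 : ∀ i, ∑ v, p i v = 1) (i : ι)
    (v : V) : residualMass p * marginal (fun f => ∏ j, normalizedResidual p j (f j)) i v =
      p i v - minMass p v := by
  rcases eq_or_ne (residualMass p) 0 with h0 | h0
  · -- with no residual mass left, every `p i` coincides with `minMass p`
    have hsum : ∑ w, (p i w - minMass p w) = 0 := by rw [sum_sub_minMass hp1, h0]
    rw [(sum_eq_zero_iff_of_nonneg fun w _ => sub_nonneg.2 (minMass_le p i w)).1 hsum v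
      (mem_univ v), h0, zero_mul]
  · have hsum (j : ι) : ∑ w, normalizedResidual p j w = 1 := by
      simp only [normalizedResidual]
      rw [← sum_div, sum_sub_minMass hp1, div_self h0]
    rw [marginal_prod, prod_congr rfl fun j _ => hsum j, prod_const_one, mul_one,
      normalizedResidual, mul_div_cancel₀ _ h0]

theorem marginal_maximalCoupling (hp1 : ∀ i, ∑ v, p i v = 1) (i : ι) (v : V) :
    marginal (maximalCoupling p) i v = p i v := by
  have hsplit : marginal (maximalCoupling p) i v = marginal (diagonalMass (minMass p)) i v +
      residualMass p * marginal (fun f => ∏ j, normalizedResidual p j (f j)) i v := by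
    simp only [marginal, maximalCoupling, sum_add_distrib, mul_sum]
  rw [hsplit, marginal_diagonalMass, residualMass_mul_marginal_normalizedResidual hp1]
  ring

end MaximalCoupling

end Coupling

theorem stmt2 {V : Type*} [Fintype V] [DecidableEq V] (k : ℕ)
    (p : Fin (k + 1) → V → ℝ)
    (hp0 : ∀ i v, 0 ≤ p i v) (hp1 : ∀ i, ∑ v, p i v = 1) :
    ∃ μ : (Fin (k + 1) → V) → ℝ, (∀ f, 0 ≤ μ f) ∧ (∑ f, μ f = 1) ∧
      (∀ i v, ∑ f ∈ Finset.univ.filter (fun f : Fin (k + 1) → V => f i = v), μ f = p i v) ∧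
      (∀ v, μ (fun _ => v) = Finset.univ.inf' Finset.univ_nonempty (fun i => p i v)) := by
  refine ⟨maximalCoupling p, maximalCoupling_nonneg hp0 hp1, ?_, marginal_maximalCoupling hp1,
    maximalCoupling_const p⟩
  simp only [sum_eq_sum_marginal _ (0 : Fin (k + 1)), marginal_maximalCoupling hp1, hp1]
end

section
/- For three pairwise jointly distributed ±1-valued random variable pairs (A₁,B₁), (A₂,B₂), (A₃,B₃) (a consistently connected cyclic system of rank 3 with identical connection marginals), a joint distribution (X₁,X₂,X₃) on {−1,1}³ reproducing all three pairwise distributions (with X₁X₂ distributed as A₁B₁, X₂X₃ as A₂B₂, X₃X₁ as A₃B₃) exists if and only if s_odd(⟨A₁B₁⟩, ⟨A₂B₂⟩, ⟨A₃B₃⟩) ≤ 1, where s_odd(x₁,x₂,x₃) = max over sign assignments ι ∈ {−1,1}³ with ι₁ι₂ι₃ = −1 of ι₁x₁+ι₂x₂+ι₃x₃. -/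
/-!
Encode `true, false` as the signs `1, -1`. A distribution `ν` on three signs is its Walsh
expansion `8 ν(σ) = 1 + ∑ mᵢ σᵢ + ∑ cᵢ σᵢ σᵢ₊₁ + τ σ₀ σ₁ σ₂`. Given consistent pair distributions
with means `mᵢ` and correlations `cᵢ`, every `τ` yields the right pair marginals (summing out the
third sign kills every term odd in it), so the only question is whether some `τ` makes all eight
values nonnegative. The even sign vectors bound `τ` from below and the odd ones from above, and
the bounds are compatible iff the base values of each even `σ` and odd `σ'` add up to something
nonnegative. When `σ'` differs from `σ` in one coordinate that sum is a multiple of a pair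
probability; when `σ' = -σ` it is `2 (1 + ∑ cᵢ σᵢ σᵢ₊₁)`, which is the condition `s_odd ≤ 1`.
Conversely, for a deterministic sign vector each odd `ε` gives `∑ εᵢ σᵢ σᵢ₊₁ ≤ 1`, as three
signs with product `-1` are not all `1`; averaging over `ν` gives `s_odd ≤ 1`.
-/

open Finset

def boolSign (b : Bool) : ℝ := if b then 1 else -1

@[simp] lemma boolSign_true : boolSign true = 1 := rfl

@[simp] lemma boolSign_false : boolSign false = -1 := rfl

lemma boolSign_eq_one_or_eq_neg_one (b : Bool) : boolSign b = 1 ∨ boolSign b = -1 := by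
  cases b <;> simp

lemma boolSign_mul_self (b : Bool) : boolSign b * boolSign b = 1 := by
  cases b <;> norm_num

lemma prod_boolSign_mul_boolSign_add_one {n : ℕ} [NeZero n] (x : Fin n → Bool) :
    ∏ i, boolSign (x i) * boolSign (x (i + 1)) = 1 := by
  have hshift : ∏ i, boolSign (x (i + 1)) = ∏ i, boolSign (x i) :=
    Fintype.prod_equiv (Equiv.addRight 1) _ _ fun _ => rfl
  rw [prod_mul_distrib, hshift, ← prod_mul_distrib]
  simp [boolSign_mul_self]

lemma sum_fin_three_bool {M : Type*} [AddCommMonoid M] (f : (Fin 3 → Bool) → M) :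
    ∑ x, f x = ∑ a, ∑ b, ∑ c, f ![a, b, c] := by
  rw [← (Fin.consEquiv fun _ => Bool).sum_comp, Fintype.sum_prod_type]
  refine sum_congr rfl fun a _ => ?_
  rw [← (finTwoArrowEquiv Bool).symm.sum_comp, Fintype.sum_prod_type]
  rfl

lemma sum_mul_eq_sum_comp_mul {α β : Type*} [Fintype α] [Fintype β] [DecidableEq β]
    {ν : α → ℝ} {q : β → ℝ} (g : α → β)
    (hq : ∀ b, ∑ x ∈ univ.filter (fun x => g x = b), ν x = q b) (f : β → ℝ) :
    ∑ b, f b * q b = ∑ x, f (g x) * ν x := by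
  simp_rw [← hq, mul_sum]
  rw [← sum_fiberwise univ g fun x => f (g x) * ν x]
  refine sum_congr rfl fun b _ => sum_congr rfl fun x hx => ?_
  rw [(mem_filter.1 hx).2]

section TwoBits

variable (q : Bool × Bool → ℝ)

def mean₁ : ℝ := ∑ z, boolSign z.1 * q z

def mean₂ : ℝ := ∑ z, boolSign z.2 * q z

def correlation : ℝ := ∑ z, boolSign z.1 * boolSign z.2 * q z

variable {q}

lemma four_mul_apply_eq (hq : ∑ z, q z = 1) (a b : Bool) :
    4 * q (a, b) = 1 + mean₁ q * boolSign a + mean₂ q * boolSign b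
      + correlation q * (boolSign a * boolSign b) := by
  simp only [Fintype.sum_prod_type, Fintype.sum_bool, mean₁, mean₂, correlation] at hq ⊢
  cases a <;> cases b <;> norm_num <;> linarith

lemma mean₂_eq_mean₁ {q' : Bool × Bool → ℝ} (h : ∀ v, ∑ u, q (u, v) = ∑ w, q' (v, w)) :
    mean₂ q = mean₁ q' := by
  simp only [mean₁, mean₂, Fintype.sum_prod_type, Fintype.sum_bool, boolSign_true,
    boolSign_false] at h ⊢
  linarith [h true, h false]

end TwoBits

lemma add_add_le_one_of_mul_mul_eq_neg_one {a b c : ℝ} (ha : a = 1 ∨ a = -1)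
    (hb : b = 1 ∨ b = -1) (hc : c = 1 ∨ c = -1) (h : a * b * c = -1) : a + b + c ≤ 1 := by
  rcases ha with rfl | rfl <;> rcases hb with rfl | rfl <;> rcases hc with rfl | rfl <;>
    revert h <;> norm_num

lemma sum_mul_boolSign_mul_boolSign_le_one {ε : Fin 3 → ℝ} (hε : ∀ i, ε i = 1 ∨ ε i = -1)
    (hodd : ∏ i, ε i = -1) (x : Fin 3 → Bool) :
    ∑ i, ε i * (boolSign (x i) * boolSign (x (i + 1))) ≤ 1 := by
  have hterm : ∀ i, ε i * (boolSign (x i) * boolSign (x (i + 1))) = 1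
      ∨ ε i * (boolSign (x i) * boolSign (x (i + 1))) = -1 := fun i => by
    rcases hε i with h | h <;> cases x i <;> cases x (i + 1) <;> simp [h]
  have hprod : ∏ i, ε i * (boolSign (x i) * boolSign (x (i + 1))) = -1 := by
    rw [prod_mul_distrib, hodd, prod_boolSign_mul_boolSign_add_one, mul_one]
  rw [Fin.prod_univ_three] at hprod
  rw [Fin.sum_univ_three]
  exact add_add_le_one_of_mul_mul_eq_neg_one (hterm 0) (hterm 1) (hterm 2) hprod

theorem sum_mul_correlation_le_one_of_joint {μ : Fin 3 → Bool × Bool → ℝ}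
    {ν : (Fin 3 → Bool) → ℝ} (hν : ∀ x, 0 ≤ ν x) (hν₁ : ∑ x, ν x = 1)
    (hmarg : ∀ i (a b : Bool),
      ∑ x ∈ univ.filter (fun x : Fin 3 → Bool => x i = a ∧ x (i + 1) = b), ν x = μ i (a, b))
    {ε : Fin 3 → ℝ} (hε : ∀ i, ε i = 1 ∨ ε i = -1) (hodd : ∏ i, ε i = -1) :
    ∑ i, ε i * correlation (μ i) ≤ 1 := by
  have hcorr : ∀ i, correlation (μ i)
      = ∑ x, boolSign (x i) * boolSign (x (i + 1)) * ν x := fun i =>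
    sum_mul_eq_sum_comp_mul (fun x : Fin 3 → Bool => (x i, x (i + 1)))
      (fun z => by simpa [Prod.ext_iff] using hmarg i z.1 z.2)
      fun z => boolSign z.1 * boolSign z.2
  calc ∑ i, ε i * correlation (μ i)
      = ∑ x, ν x * ∑ i, ε i * (boolSign (x i) * boolSign (x (i + 1))) := by
        simp_rw [hcorr, mul_sum]
        rw [sum_comm]
        exact sum_congr rfl fun x _ => sum_congr rfl fun i _ => by ring
    _ ≤ ∑ x, ν x * 1 := sum_le_sum fun x _ =>
        mul_le_mul_of_nonneg_left (sum_mul_boolSign_mul_boolSign_le_one hε hodd x) (hν x)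
    _ = 1 := by simp [hν₁]

lemma exists_forall_nonneg_add_mul_sign {ι : Type*} [Fintype ι] (a π : ι → ℝ)
    (hπ : ∀ x, π x = 1 ∨ π x = -1) (hne : ∃ x, π x = 1)
    (h : ∀ x y, π x = 1 → π y = -1 → 0 ≤ a x + a y) : ∃ τ, ∀ x, 0 ≤ a x + τ * π x := by
  obtain ⟨x₁, hx₁⟩ := hne
  obtain ⟨x₀, hx₀, hmax⟩ :=
    (univ.filter (π · = 1)).exists_max_image (fun x => -a x) ⟨x₁, by simpa using hx₁⟩
  refine ⟨-a x₀, fun x => ?_⟩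
  rcases hπ x with hx | hx
  · have := hmax x (by simpa using hx)
    rw [hx]; linarith
  · have := h x₀ x (by simpa using hx₀) hx
    rw [hx]; linarith

def signParity (x : Fin 3 → Bool) : ℝ := ∏ i, boolSign (x i)

lemma signParity_eq_one_or_eq_neg_one (x : Fin 3 → Bool) :
    signParity x = 1 ∨ signParity x = -1 :=
  prod_induction _ (fun r : ℝ => r = 1 ∨ r = -1)
    (by rintro _ _ (rfl | rfl) (rfl | rfl) <;> norm_num) (Or.inl rfl)
    fun i _ => boolSign_eq_one_or_eq_neg_one (x i)

def pairMomentSum (m c : Fin 3 → ℝ) (x : Fin 3 → Bool) : ℝ :=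
  1 + ∑ i, m i * boolSign (x i) + ∑ i, c i * (boolSign (x i) * boolSign (x (i + 1)))

noncomputable def jointOfMoments (m c : Fin 3 → ℝ) (τ : ℝ) (x : Fin 3 → Bool) : ℝ :=
  (pairMomentSum m c x + τ * signParity x) / 8

lemma sum_filter_jointOfMoments (m c : Fin 3 → ℝ) (τ : ℝ) (i : Fin 3) (a b : Bool) :
    ∑ x ∈ univ.filter (fun x : Fin 3 → Bool => x i = a ∧ x (i + 1) = b), jointOfMoments m c τ x
      = (1 + m i * boolSign a + m (i + 1) * boolSign b + c i * (boolSign a * boolSign b)) / 4 := by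
  rw [sum_filter, sum_fin_three_bool]
  fin_cases i <;> cases a <;> cases b <;>
    simp [jointOfMoments, pairMomentSum, signParity, Fin.sum_univ_three, Fin.prod_univ_three] <;>
    ring

lemma sum_jointOfMoments (m c : Fin 3 → ℝ) (τ : ℝ) : ∑ x, jointOfMoments m c τ x = 1 := by
  simp [sum_fin_three_bool, jointOfMoments, pairMomentSum, signParity, Fin.sum_univ_three,
    Fin.prod_univ_three]
  ring

/- An odd `y` is either `x` with one coordinate flipped, where the sum is twice one of the
instances `hpair i (x i) (x (i + 1))`, or the complement of `x`, where it is twice `hbell x`. -/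
lemma pairMomentSum_add_nonneg {m c : Fin 3 → ℝ}
    (hpair : ∀ i a b, 0 ≤ 1 + m i * boolSign a + m (i + 1) * boolSign b
      + c i * (boolSign a * boolSign b))
    (hbell : ∀ x : Fin 3 → Bool, 0 ≤ 1 + ∑ i, c i * (boolSign (x i) * boolSign (x (i + 1))))
    {x y : Fin 3 → Bool} (hx : signParity x = 1) (hy : signParity y = -1) :
    0 ≤ pairMomentSum m c x + pairMomentSum m c y := by
  have h₀ := hpair 0 (x 0) (x 1)
  have h₁ := hpair 1 (x 1) (x 2)
  have h₂ := hpair 2 (x 2) (x 0)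
  have hcompl := hbell x
  clear hpair hbell
  simp only [pairMomentSum, signParity, Fin.sum_univ_three, Fin.prod_univ_three, Fin.isValue,
    Fin.reduceAdd] at *
  generalize x 0 = x₀, x 1 = x₁, x 2 = x₂ at *
  generalize y 0 = y₀, y 1 = y₁, y 2 = y₂ at *
  cases x₀ <;> cases x₁ <;> cases x₂ <;> norm_num at hx <;>
    cases y₀ <;> cases y₁ <;> cases y₂ <;> norm_num at hy <;> norm_num at * <;> linarith

theorem exists_joint_of_sum_mul_correlation_le_one (μ : Fin 3 → Bool × Bool → ℝ)
    (hpos : ∀ i z, 0 ≤ μ i z) (hsum : ∀ i, ∑ z, μ i z = 1)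
    (hcons : ∀ i (v : Bool), ∑ u, μ i (u, v) = ∑ w, μ (i + 1) (v, w))
    (hbell : ∀ ε : Fin 3 → ℝ, (∀ i, ε i = 1 ∨ ε i = -1) → ∏ i, ε i = -1 →
      ∑ i, ε i * correlation (μ i) ≤ 1) :
    ∃ ν : (Fin 3 → Bool) → ℝ, (∀ x, 0 ≤ ν x) ∧ ∑ x, ν x = 1 ∧
      ∀ i (a b : Bool),
        ∑ x ∈ univ.filter (fun x : Fin 3 → Bool => x i = a ∧ x (i + 1) = b), ν x = μ i (a, b) := by
  set m := fun i => mean₁ (μ i)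
  set c := fun i => correlation (μ i)
  have hμ : ∀ i a b, 4 * μ i (a, b) = 1 + m i * boolSign a + m (i + 1) * boolSign b
      + c i * (boolSign a * boolSign b) := fun i a b => by
    rw [four_mul_apply_eq (hsum i), mean₂_eq_mean₁ (hcons i)]
  have hpair : ∀ i a b, 0 ≤ 1 + m i * boolSign a + m (i + 1) * boolSign b
      + c i * (boolSign a * boolSign b) := fun i a b => by
    rw [← hμ]; linarith [hpos i (a, b)]
  have hbell_signs :
      ∀ x : Fin 3 → Bool, 0 ≤ 1 + ∑ i, c i * (boolSign (x i) * boolSign (x (i + 1))) := by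
    intro x
    have := hbell (fun i => -(boolSign (x i) * boolSign (x (i + 1)))) (fun i => ?_) ?_
    · simp only [c, neg_mul, sum_neg_distrib, mul_comm (correlation _)] at this ⊢
      linarith
    · cases x i <;> cases x (i + 1) <;> simp
    · rw [prod_neg, prod_boolSign_mul_boolSign_add_one]; norm_num
  obtain ⟨τ, hτ⟩ := exists_forall_nonneg_add_mul_sign (pairMomentSum m c) signParity
    signParity_eq_one_or_eq_neg_one ⟨fun _ => true, by simp [signParity]⟩
    fun x y hx hy => pairMomentSum_add_nonneg hpair hbell_signs hx hy
  refine ⟨jointOfMoments m c τ, fun x => div_nonneg (hτ x) (by norm_num),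
    sum_jointOfMoments m c τ, fun i a b => ?_⟩
  rw [sum_filter_jointOfMoments, ← hμ]
  ring

theorem stmt12 (μ : Fin 3 → Bool × Bool → ℝ)
    (hpos : ∀ i z, 0 ≤ μ i z) (hsum : ∀ i, ∑ z, μ i z = 1)
    (hcons : ∀ i (v : Bool), ∑ u, μ i (u, v) = ∑ w, μ (i + 1) (v, w)) :
    (∃ ν : (Fin 3 → Bool) → ℝ, (∀ x, 0 ≤ ν x) ∧ (∑ x, ν x = 1) ∧
      (∀ i (a b : Bool),
        ∑ x ∈ Finset.univ.filter (fun x : Fin 3 → Bool => x i = a ∧ x (i + 1) = b), ν x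
          = μ i (a, b))) ↔
    (∀ ε : Fin 3 → ℝ, (∀ i, ε i = 1 ∨ ε i = -1) → (∏ i, ε i) = -1 →
      ∑ i, ε i * (∑ z : Bool × Bool,
        (if z.1 then (1 : ℝ) else -1) * (if z.2 then (1 : ℝ) else -1) * μ i z) ≤ 1) :=
  ⟨fun ⟨_, hν, hν₁, hmarg⟩ _ hε hodd => sum_mul_correlation_le_one_of_joint hν hν₁ hmarg hε hodd,
    exists_joint_of_sum_mul_correlation_le_one μ hpos hsum hcons⟩
end

section
/- In any cyclic rank-2 system of ±1-valued random variables with both bunches having uniform marginals and Pr[R₁¹=R₂¹]=1, Pr[R₁²=R₂²]=p for p ∈ [0, 1/2], the minimum over all maximally connected quasi-couplings S (signed mass functions γ on {−1,1}⁴ summing to 1 whose bunch marginals match and whose connection subcouplings are maximal couplings) of the total variation ∑_v |γ(v)| equals 2(1 − p). -/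
theorem stmt16 (p : ℝ) (hp0 : 0 ≤ p) (hp1 : p ≤ 1 / 2) :
    IsLeast
      {t : ℝ | ∃ γ : (Bool × Bool) × (Bool × Bool) → ℝ,
        (∑ v, γ v = 1) ∧
        (∀ a : Bool × Bool, ∑ b, γ (a, b) = if a.1 = a.2 then (1 / 2 : ℝ) else 0) ∧
        (∀ b : Bool × Bool, ∑ a, γ (a, b) = if b.1 = b.2 then p else 1 / 2 - p) ∧
        (∀ u v : Bool,
          (∑ x ∈ Finset.univ.filter
              (fun x : (Bool × Bool) × (Bool × Bool) => x.1.1 = u ∧ x.2.1 = v), γ x)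
            = if u = v then (1 / 2 : ℝ) else 0) ∧
        (∀ u v : Bool,
          (∑ x ∈ Finset.univ.filter
              (fun x : (Bool × Bool) × (Bool × Bool) => x.1.2 = u ∧ x.2.2 = v), γ x)
            = if u = v then (1 / 2 : ℝ) else 0) ∧
        t = ∑ v, |γ v|}
      (2 * (1 - p)) := by
  constructor
  · refine ⟨fun x => if x.1.1 = x.1.2 then
        (if x.2.1 = x.1.1 then (if x.2.2 = x.1.1 then 1/4 + p/2 else 1/4 - p/2)
         else (if x.2.2 = x.1.1 then 1/4 - p/2 else p/2 - 1/4)) else 0,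
      ?_, ?_, ?_, ?_, ?_, ?_⟩
    · simp [Fintype.sum_prod_type]; ring
    · rintro ⟨a1, a2⟩; cases a1 <;> cases a2 <;> simp [Fintype.sum_prod_type] <;> ring
    · rintro ⟨b1, b2⟩; cases b1 <;> cases b2 <;> simp [Fintype.sum_prod_type] <;> ring
    · intro u v; cases u <;> cases v <;>
        simp [Finset.sum_filter, Fintype.sum_prod_type] <;> ring
    · intro u v; cases u <;> cases v <;>
        simp [Finset.sum_filter, Fintype.sum_prod_type] <;> ring
    · simp [Fintype.sum_prod_type]
      rw [abs_of_nonneg (by norm_num; linarith : (0:ℝ) ≤ 4⁻¹ + p / 2),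
        abs_of_nonneg (by norm_num; linarith : (0:ℝ) ≤ 4⁻¹ - p / 2),
        abs_of_nonpos (by norm_num; linarith : (p / 2 - 4⁻¹ : ℝ) ≤ 0)]
      ring
  · rintro t ⟨γ, hs, hA, hB, hC1, hC2, rfl⟩
    have hA1 := hA (true, false)
    have hA2 := hA (false, true)
    have hB1 := hB (true, true)
    have hB2 := hB (false, false)
    have hC1t := hC1 true true
    have hC1f := hC1 false false
    have hC2t := hC2 true true
    have hC2f := hC2 false false
    simp [Finset.sum_filter, Fintype.sum_prod_type] at hA1 hA2 hB1 hB2 hC1t hC1f hC2t hC2f ⊢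
    have l1 := le_abs_self (γ ((true, true), (true, true)))
    have l2 := neg_abs_le (γ ((true, true), (false, false)))
    have l3 := le_abs_self (γ ((false, false), (false, false)))
    have l4 := neg_abs_le (γ ((false, false), (true, true)))
    have l5 := le_abs_self (γ ((true, true), (true, false)))
    have l6 := le_abs_self (γ ((true, true), (false, true)))
    have l7 := le_abs_self (γ ((false, false), (false, true)))
    have l8 := le_abs_self (γ ((false, false), (true, false)))
    have l9 := le_abs_self (γ ((true, false), (true, false)))
    have l10 := neg_abs_le (γ ((true, false), (false, true)))
    have l11 := neg_abs_le (γ ((true, false), (true, true)))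
    have l12 := neg_abs_le (γ ((true, false), (false, false)))
    have l13 := le_abs_self (γ ((false, true), (false, true)))
    have l14 := neg_abs_le (γ ((false, true), (true, false)))
    have l15 := neg_abs_le (γ ((false, true), (true, true)))
    have l16 := neg_abs_le (γ ((false, true), (false, false)))
    linarith
end
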